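/- Let ψ be a unit vector in ℂ^d ⊗ ℂ^d with matrixification ψ̃. Then the infimum over all d×d unitaries U of ‖ |ψ⟩⟨ψ| − (U⊗𝟙)|I⟩⟨I|(U⊗𝟙)† ‖_F² equals 2 − 2‖ψ̃‖₁²/d, where ‖ψ̃‖₁ is the trace norm (the sum of the singular values) of ψ̃. -/

import Mathlib

/-! Both projectors have unit trace, so the squared Hilbert–Schmidt distance between them is
`2 - 2 |⟨φ, ψ⟩|²` with `φ = (U ⊗ 1)|I⟩`, and `⟨φ, ψ⟩ = tr (U† ψ̃) / √d`. Writing `ψ̃ = W Σ V†` as a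
singular value decomposition, `tr (U† ψ̃) = Σᵢ (V† U† W)ᵢᵢ σᵢ`; the diagonal entries of the unitary
`V† U† W` have modulus at most one, so `|tr (U† ψ̃)| ≤ ‖ψ̃‖₁`, with equality at `U = W V†`. -/

open scoped BigOperators Matrix Kronecker ComplexOrder

noncomputable section

/-- The rank-one projector |ψ⟩⟨ψ|. -/
def outer {n : Type*} [Fintype n] (ψ : n → ℂ) : Matrix n n ℂ :=
  Matrix.of fun p q => ψ p * star (ψ q)

/-- Frobenius (Hilbert-Schmidt) norm of a complex matrix. -/
def frobNorm {m n : Type*} [Fintype m] [Fintype n] (X : Matrix m n ℂ) : ℝ :=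
  Real.sqrt (∑ i, ∑ j, Complex.normSq (X i j))

/-- The maximally entangled unit vector |I⟩. -/
def maxEnt (d : ℕ) : Fin d × Fin d → ℂ :=
  fun p => if p.1 = p.2 then (↑(Real.sqrt d))⁻¹ else 0

/-- Matrixification of a bipartite vector. -/
def matrixify (d : ℕ) (ψ : Fin d × Fin d → ℂ) : Matrix (Fin d) (Fin d) ℂ :=
  Matrix.of fun i j => ψ (i, j)

/-- The trace norm: the sum of the singular values, i.e. of the square roots of the
eigenvalues of X†X. -/
def traceNorm {n : ℕ} (X : Matrix (Fin n) (Fin n) ℂ) : ℝ :=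
  ∑ i, Real.sqrt ((Matrix.posSemidef_conjTranspose_mul_self X).1.eigenvalues i)

open Matrix

section RankOne

variable {m n : Type*} [Fintype m] [Fintype n]

lemma frobNorm_sq (X : Matrix m n ℂ) : frobNorm X ^ 2 = ∑ i, ∑ j, Complex.normSq (X i j) :=
  Real.sq_sqrt <| Finset.sum_nonneg fun _ _ => Finset.sum_nonneg fun _ _ => Complex.normSq_nonneg _

lemma mul_outer_mul_conjTranspose (M : Matrix m n ℂ) (x : n → ℂ) :
    M * outer x * Mᴴ = outer (M *ᵥ x) := by
  ext p q
  simp only [mul_apply, outer, of_apply, conjTranspose_apply, mulVec, dotProduct, star_sum,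
    star_mul', Finset.sum_mul, Finset.mul_sum]
  exact Finset.sum_congr rfl fun _ _ => Finset.sum_congr rfl fun _ _ => by ring

lemma normSq_sum_eq_sum_sum_re (z : n → ℂ) :
    Complex.normSq (∑ p, z p) = ∑ p, ∑ q, (z p * star (z q)).re := by
  rw [← Complex.ofReal_re (Complex.normSq _), ← Complex.mul_conj, ← Complex.star_def, star_sum,
    Finset.sum_mul_sum, Complex.re_sum]
  simp only [Complex.re_sum]

lemma frobNorm_outer_sub_outer_sq (x y : n → ℂ) :
    frobNorm (outer x - outer y) ^ 2 =
      (∑ p, Complex.normSq (x p)) ^ 2 + (∑ p, Complex.normSq (y p)) ^ 2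
        - 2 * Complex.normSq (∑ p, x p * star (y p)) := by
  rw [frobNorm_sq, sq, sq, Finset.sum_mul_sum, Finset.sum_mul_sum, normSq_sum_eq_sum_sum_re]
  simp only [Finset.mul_sum, ← Finset.sum_add_distrib, ← Finset.sum_sub_distrib]
  refine Finset.sum_congr rfl fun p _ => Finset.sum_congr rfl fun q _ => ?_
  simp only [Matrix.sub_apply, outer, of_apply, Complex.normSq_sub, star_mul',
    Complex.star_def, Complex.normSq_conj, map_mul, Complex.conj_conj]
  ring_nf

end RankOne

lemma sum_normSq_row_of_mem_unitaryGroup {n : Type*} [Fintype n] [DecidableEq n]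
    {U : Matrix n n ℂ} (hU : U ∈ unitaryGroup n ℂ) (i : n) :
    ∑ j, Complex.normSq (U i j) = 1 := by
  have hrow : (U * Uᴴ) i i = ((∑ j, Complex.normSq (U i j) : ℝ) : ℂ) := by
    simp [mul_apply, Complex.mul_conj]
  rw [← star_eq_conjTranspose, Unitary.mul_star_self_of_mem hU, one_apply_eq] at hrow
  exact_mod_cast hrow.symm

section MaximallyEntangled

variable {d : ℕ}

lemma kronecker_one_mulVec_maxEnt (U : Matrix (Fin d) (Fin d) ℂ) (p : Fin d × Fin d) :
    ((U ⊗ₖ (1 : Matrix (Fin d) (Fin d) ℂ)) *ᵥ maxEnt d) p = U p.1 p.2 / (√d : ℝ) := by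
  obtain ⟨i, j⟩ := p
  simp only [mulVec, dotProduct, maxEnt, Fintype.sum_prod_type, kroneckerMap_apply, one_apply,
    mul_ite, ite_mul, mul_zero, zero_mul, mul_one]
  rw [Finset.sum_comm]
  simp [Finset.sum_ite_eq, Finset.sum_ite_eq', div_eq_mul_inv]

lemma sum_normSq_kronecker_one_mulVec_maxEnt (hd : 0 < d) {U : Matrix (Fin d) (Fin d) ℂ}
    (hU : U ∈ unitaryGroup (Fin d) ℂ) :
    ∑ p, Complex.normSq (((U ⊗ₖ (1 : Matrix (Fin d) (Fin d) ℂ)) *ᵥ maxEnt d) p) = 1 := by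
  simp only [kronecker_one_mulVec_maxEnt, Complex.normSq_div, Complex.normSq_ofReal,
    Real.mul_self_sqrt (Nat.cast_nonneg d), Fintype.sum_prod_type, ← Finset.sum_div,
    sum_normSq_row_of_mem_unitaryGroup hU, Finset.sum_const, Finset.card_univ, Fintype.card_fin,
    nsmul_eq_mul, mul_one]
  exact div_self (by positivity)

lemma sum_mul_star_kronecker_one_mulVec_maxEnt (ψ : Fin d × Fin d → ℂ)
    (U : Matrix (Fin d) (Fin d) ℂ) :
    ∑ p, ψ p * star (((U ⊗ₖ (1 : Matrix (Fin d) (Fin d) ℂ)) *ᵥ maxEnt d) p)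
      = trace (Uᴴ * matrixify d ψ) / (√d : ℝ) := by
  simp only [kronecker_one_mulVec_maxEnt, trace, diag_apply, mul_apply, conjTranspose_apply,
    matrixify, of_apply, Fintype.sum_prod_type, Finset.sum_div, star_div₀, Complex.star_def,
    Complex.conj_ofReal]
  rw [Finset.sum_comm]
  exact Finset.sum_congr rfl fun _ _ => Finset.sum_congr rfl fun _ _ => by ring

lemma frobNorm_outer_sub_conj_outer_maxEnt_sq (hd : 0 < d) {ψ : Fin d × Fin d → ℂ}
    (hψ : ∑ q, Complex.normSq (ψ q) = 1) {U : Matrix (Fin d) (Fin d) ℂ}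
    (hU : U ∈ unitaryGroup (Fin d) ℂ) :
    frobNorm (outer ψ - (U ⊗ₖ (1 : Matrix (Fin d) (Fin d) ℂ)) * outer (maxEnt d) *
        (U ⊗ₖ (1 : Matrix (Fin d) (Fin d) ℂ))ᴴ) ^ 2
      = 2 - 2 * Complex.normSq (trace (Uᴴ * matrixify d ψ)) / d := by
  rw [mul_outer_mul_conjTranspose, frobNorm_outer_sub_outer_sq, hψ,
    sum_normSq_kronecker_one_mulVec_maxEnt hd hU, sum_mul_star_kronecker_one_mulVec_maxEnt,
    Complex.normSq_div, Complex.normSq_ofReal, Real.mul_self_sqrt (Nat.cast_nonneg d)]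
  ring

end MaximallyEntangled

lemma trace_mul_diagonal {α m : Type*} [NonUnitalNonAssocSemiring α] [Fintype m] [DecidableEq m]
    (M : Matrix m m α) (σ : m → α) : trace (M * diagonal σ) = ∑ i, M i i * σ i := by
  simp [trace, mul_diagonal]

section TraceNorm

variable {n : ℕ}

lemma exists_unitary_mul_diagonal_eq_of_conjTranspose_mul_self_eq_diagonal
    {B : Matrix (Fin n) (Fin n) ℂ} {μ : Fin n → ℝ} (hB : Bᴴ * B = diagonal fun i => (μ i : ℂ)) :
    ∃ W ∈ unitaryGroup (Fin n) ℂ, B = W * diagonal fun i => ((√(μ i) : ℝ) : ℂ) := by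
  let col : Fin n → EuclideanSpace ℂ (Fin n) := fun j => WithLp.toLp 2 fun i => B i j
  have hinner (i j : Fin n) : inner ℂ (col i) (col j) = (Bᴴ * B) i j := by
    simp [col, mul_apply, PiLp.inner_apply, mul_comm]
  have horth : Pairwise fun i j => inner ℂ (col i) (col j) = 0 := fun i j hij => by
    simp only [hinner, hB, diagonal_apply_ne _ hij]
  have hnorm (j : Fin n) : ‖col j‖ = √(μ j) := by
    have hsq := hinner j j
    rw [hB, diagonal_apply_eq, inner_self_eq_norm_sq_to_K] at hsq
    have hsq' : ‖col j‖ ^ 2 = μ j := by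
      rw [← RCLike.ofReal_pow] at hsq
      exact RCLike.ofReal_injective hsq
    rw [← hsq', Real.sqrt_sq (norm_nonneg _)]
  let b := InnerProductSpace.gramSchmidtOrthonormalBasis (𝕜 := ℂ) (by simp) col
  refine ⟨(EuclideanSpace.basisFun (Fin n) ℂ).toBasis.toMatrix b.toBasis,
    (EuclideanSpace.basisFun (Fin n) ℂ).toMatrix_orthonormalBasis_mem_unitary b, ?_⟩
  ext i j
  rw [mul_diagonal, ← hnorm]
  by_cases hj : col j = 0
  · have hBij : B i j = 0 := congrArg (fun v : EuclideanSpace ℂ (Fin n) => v i) hj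
    simp [hj, hBij]
  · have hb : b j = (‖col j‖⁻¹ : ℂ) • col j :=
      InnerProductSpace.gramSchmidtOrthonormalBasis_apply_of_orthogonal _ horth hj
    have hne : (‖col j‖ : ℂ) ≠ 0 := by simpa using hj
    rw [Module.Basis.toMatrix_apply]
    simp only [EuclideanSpace.basisFun_toBasis, PiLp.basisFun_repr, OrthonormalBasis.coe_toBasis,
      hb, PiLp.smul_apply, smul_eq_mul]
    rw [mul_right_comm, inv_mul_cancel₀ hne, one_mul]

theorem exists_singular_value_decomposition (A : Matrix (Fin n) (Fin n) ℂ) :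
    ∃ W ∈ unitaryGroup (Fin n) ℂ, ∃ V ∈ unitaryGroup (Fin n) ℂ, A = W * diagonal (fun i =>
      ((√((posSemidef_conjTranspose_mul_self A).1.eigenvalues i) : ℝ) : ℂ)) * Vᴴ := by
  let hH := (posSemidef_conjTranspose_mul_self A).1
  let V : Matrix (Fin n) (Fin n) ℂ := hH.eigenvectorUnitary
  have hAV : (A * V)ᴴ * (A * V) = diagonal fun i => (hH.eigenvalues i : ℂ) := by
    simpa [V, conjTranspose_mul, mul_assoc, star_eq_conjTranspose, Function.comp_def] using
      hH.conjStarAlgAut_star_eigenvectorUnitary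
  obtain ⟨W, hW, hAVW⟩ := exists_unitary_mul_diagonal_eq_of_conjTranspose_mul_self_eq_diagonal hAV
  refine ⟨W, hW, V, hH.eigenvectorUnitary.2, ?_⟩
  rw [← hAVW, mul_assoc, ← star_eq_conjTranspose,
    Unitary.mul_star_self_of_mem hH.eigenvectorUnitary.2, mul_one]

lemma norm_trace_conjTranspose_mul_le_traceNorm (A : Matrix (Fin n) (Fin n) ℂ)
    {U : Matrix (Fin n) (Fin n) ℂ} (hU : U ∈ unitaryGroup (Fin n) ℂ) :
    ‖trace (Uᴴ * A)‖ ≤ traceNorm A := by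
  obtain ⟨W, hW, V, hV, hA⟩ := exists_singular_value_decomposition A
  set σ := fun i => √((posSemidef_conjTranspose_mul_self A).1.eigenvalues i)
  have hM : Vᴴ * Uᴴ * W ∈ unitaryGroup (Fin n) ℂ :=
    mul_mem (mul_mem (Unitary.star_mem hV) (Unitary.star_mem hU)) hW
  calc ‖trace (Uᴴ * A)‖ = ‖∑ i, (Vᴴ * Uᴴ * W) i i * (σ i : ℂ)‖ := by
        conv_lhs => rw [hA, ← mul_assoc, trace_mul_comm]
        simp only [← trace_mul_diagonal, mul_assoc, σ]
    _ ≤ ∑ i, ‖(Vᴴ * Uᴴ * W) i i‖ * σ i := by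
        refine (norm_sum_le _ _).trans_eq (Finset.sum_congr rfl fun i _ => ?_)
        rw [norm_mul, Complex.norm_of_nonneg (Real.sqrt_nonneg _)]
    _ ≤ ∑ i, σ i := by
        gcongr with i
        exact mul_le_of_le_one_left (Real.sqrt_nonneg _) (entry_norm_bound_of_unitary hM i i)
    _ = traceNorm A := rfl

lemma exists_trace_conjTranspose_mul_eq_traceNorm (A : Matrix (Fin n) (Fin n) ℂ) :
    ∃ U ∈ unitaryGroup (Fin n) ℂ, trace (Uᴴ * A) = traceNorm A := by
  obtain ⟨W, hW, V, hV, hA⟩ := exists_singular_value_decomposition A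
  refine ⟨W * Vᴴ, mul_mem hW (Unitary.star_mem hV), ?_⟩
  conv_lhs => rw [hA, conjTranspose_mul, conjTranspose_conjTranspose, ← star_eq_conjTranspose W,
    mul_assoc, ← mul_assoc (star W), ← mul_assoc (star W), Unitary.star_mul_self_of_mem hW,
    one_mul, ← mul_assoc, trace_mul_comm, ← mul_assoc, ← star_eq_conjTranspose,
    Unitary.star_mul_self_of_mem hV, one_mul, trace_diagonal]
  rw [traceNorm, Complex.ofReal_sum]

end TraceNorm

/-- The squared Frobenius distance from a pure state to the set of maximally entangled
pure states equals 2 − 2‖ψ̃‖₁²/d. -/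
theorem inf_sq_dist_to_maximally_entangled
    (d : ℕ) (hd : 0 < d) (ψ : Fin d × Fin d → ℂ)
    (hψ : ∑ q, Complex.normSq (ψ q) = 1) :
    sInf { x : ℝ | ∃ U ∈ Matrix.unitaryGroup (Fin d) ℂ,
        x = (frobNorm (outer ψ -
          (U ⊗ₖ (1 : Matrix (Fin d) (Fin d) ℂ)) * outer (maxEnt d) *
            (U ⊗ₖ (1 : Matrix (Fin d) (Fin d) ℂ))ᴴ)) ^ 2 }
      = 2 - 2 * (traceNorm (matrixify d ψ)) ^ 2 / d := by
  refine IsLeast.csInf_eq ⟨?_, ?_⟩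
  · obtain ⟨U, hU, htrace⟩ := exists_trace_conjTranspose_mul_eq_traceNorm (matrixify d ψ)
    refine ⟨U, hU, ?_⟩
    rw [frobNorm_outer_sub_conj_outer_maxEnt_sq hd hψ hU, htrace, Complex.normSq_ofReal, sq]
  · rintro x ⟨U, hU, rfl⟩
    rw [frobNorm_outer_sub_conj_outer_maxEnt_sq hd hψ hU, ← Complex.sq_norm]
    have hle := norm_trace_conjTranspose_mul_le_traceNorm (matrixify d ψ) hU
    gcongr
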